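/- Let V = ‖X₀‖² and Tᵢ = V^{-1/2} Xᵢ for i = 1,…,k, where (X₀, X₁,…,X_k) ∈ ℝ^{n₀}×⋯×ℝ^{n_k} has joint density h(‖x₀‖² + ⋯ + ‖x_k‖²). Then the joint density of (V, T₁,…,T_k) is π^{n₀/2}/Γ(n₀/2) · v^{n/2 - 1} h(v(1 + ∑ᵢ‖tᵢ‖²)) where n = n₀ + ⋯ + n_k. -/

import Mathlib

open MeasureTheory Real Set Metric
open scoped ENNReal

local notation "dim" => Module.finrank ℝ

lemma lintegral_fun_norm_addHaar'' {E : Type*} [NormedAddCommGroup E] [NormedSpace ℝ E]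
    [MeasurableSpace E] [BorelSpace E] [FiniteDimensional ℝ E] [Nontrivial E]
    (μ : Measure E) [μ.IsAddHaarMeasure] (f : ℝ → ℝ≥0∞) (hf : Measurable f) :
    ∫⁻ x, f ‖x‖ ∂μ = (dim E) * μ (ball 0 1) *
      ∫⁻ y in Ioi (0:ℝ), ENNReal.ofReal (y ^ (dim E - 1)) * f y := by
  calc
    ∫⁻ x, f ‖x‖ ∂μ = ∫⁻ x : ({(0:E)}ᶜ : Set E), f ‖x.1‖ ∂(μ.comap (↑)) := by
      rw [lintegral_subtype_comap (measurableSet_singleton (0:E)).compl (fun x => f ‖x‖),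
        MeasureTheory.restrict_compl_singleton]
    _ = ∫⁻ p : sphere (0:E) 1 × Ioi (0:ℝ), f p.2
        ∂(μ.toSphere.prod (.volumeIoiPow (dim E - 1))) :=
      by simpa [homeomorphUnitSphereProd] using
        (μ.measurePreserving_homeomorphUnitSphereProd).lintegral_comp
          (f := fun p : sphere (0:E) 1 × Ioi (0:ℝ) => f p.2)
          ((hf.comp measurable_subtype_coe).comp measurable_snd)
    _ = μ.toSphere univ * ∫⁻ y : Ioi (0:ℝ), f y ∂(Measure.volumeIoiPow (dim E - 1)) := by
      rw [lintegral_prod (fun p : sphere (0:E) 1 × Ioi (0:ℝ) => f p.2)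
        (((hf.comp measurable_subtype_coe).comp measurable_snd).aemeasurable)]
      simp [lintegral_const, mul_comm]
    _ = (dim E) * μ (ball 0 1) *
        ∫⁻ y in Ioi (0:ℝ), ENNReal.ofReal (y ^ (dim E - 1)) * f y := by
      rw [μ.toSphere_apply_univ, Measure.volumeIoiPow,
        lintegral_withDensity_eq_lintegral_mul _
          (f := fun y : Ioi (0:ℝ) => ENNReal.ofReal (y.1 ^ (dim E - 1))) (by fun_prop)
          (g := fun y : Ioi (0:ℝ) => f y) (hf.comp measurable_subtype_coe),
        ← lintegral_subtype_comap measurableSet_Ioi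
          (fun y => ENNReal.ofReal (y ^ (dim E - 1)) * f y)]
      rfl

lemma lintegral_comp_inv_smul'' {E : Type*} [NormedAddCommGroup E] [NormedSpace ℝ E]
    [MeasurableSpace E] [BorelSpace E] [FiniteDimensional ℝ E]
    (μ : Measure E) [μ.IsAddHaarMeasure] {c : ℝ} (hc : c ≠ 0)
    (g : E → ℝ≥0∞) (hg : Measurable g) :
    ∫⁻ x, g (c⁻¹ • x) ∂μ = ENNReal.ofReal (|c| ^ dim E) * ∫⁻ x, g x ∂μ := by
  calc
    ∫⁻ x, g (c⁻¹ • x) ∂μ = ∫⁻ y, g y ∂(Measure.map (c⁻¹ • ·) μ) :=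
      (lintegral_map hg (measurable_const_smul _)).symm
    _ = ENNReal.ofReal (|c| ^ dim E) * ∫⁻ x, g x ∂μ := by
      rw [Measure.map_addHaar_smul μ (inv_ne_zero hc), lintegral_smul_measure]
      congr 1
      simp [abs_inv, abs_pow]

lemma sq_image_Ioi' : (fun x : ℝ => x ^ 2) '' Ioi 0 = Ioi 0 := by
  ext v
  constructor
  · rintro ⟨r, hr, rfl⟩
    exact pow_pos (mem_Ioi.1 hr) 2
  · intro hv
    exact ⟨Real.sqrt v, Real.sqrt_pos.2 hv, (Real.sq_sqrt hv.le)⟩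

/-- change of variables `v = r^2` on `(0, ∞)` for lower integrals -/
lemma lintegral_Ioi_sq' (W : ℝ → ℝ≥0∞) :
    ∫⁻ v in Ioi (0:ℝ), W v =
      ∫⁻ r in Ioi (0:ℝ), ENNReal.ofReal (2 * r) * W (r ^ 2) := by
  have hderiv : ∀ x ∈ Ioi (0:ℝ),
      HasFDerivWithinAt (fun x : ℝ => x ^ 2)
        ((1 : ℝ →L[ℝ] ℝ).smulRight (2 * x)) (Ioi 0) x := by
    intro x _
    have := (hasDerivAt_pow 2 x).hasDerivWithinAt (s := Ioi (0:ℝ))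
    simpa [mul_comm, ContinuousLinearMap.smulRight_one_eq_toSpanSingleton] using this.hasFDerivWithinAt
  have hinj : InjOn (fun x : ℝ => x ^ 2) (Ioi 0) := fun a ha b hb hab => by
    simp only [mem_Ioi] at ha hb
    simp only at hab
    nlinarith [sq_nonneg (a - b), sq_nonneg (a + b)]
  have := lintegral_image_eq_lintegral_abs_det_fderiv_mul volume measurableSet_Ioi
    hderiv hinj W
  rw [sq_image_Ioi'] at this
  rw [this]
  refine setLIntegral_congr_fun measurableSet_Ioi (fun r hr => ?_)
  rw [ContinuousLinearMap.smulRight_one_eq_toSpanSingleton, ContinuousLinearMap.det_toSpanSingleton, abs_of_pos (by simp only [mem_Ioi] at hr; linarith)]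

lemma const_eq' (n₀ N : ℕ) (hn₀ : 0 < n₀) {r : ℝ} (hr : 0 < r) :
    (n₀:ℝ) * (Real.sqrt π ^ n₀ / Real.Gamma ((n₀:ℝ)/2 + 1)) * (r ^ (n₀-1) * r ^ N)
      = 2*r * (π ^ ((n₀:ℝ)/2) / Real.Gamma ((n₀:ℝ)/2) * (r^2) ^ (((n₀:ℝ) + (N:ℝ))/2 - 1)) := by
  have hn : (0:ℝ) < (n₀:ℝ)/2 := by positivity
  have hΓ : Real.Gamma ((n₀:ℝ)/2 + 1) = (n₀:ℝ)/2 * Real.Gamma ((n₀:ℝ)/2) :=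
    Real.Gamma_add_one hn.ne'
  have hΓpos : 0 < Real.Gamma ((n₀:ℝ)/2) := Real.Gamma_pos_of_pos hn
  have hsqrt : Real.sqrt π ^ n₀ = π ^ ((n₀:ℝ)/2) := by
    rw [Real.sqrt_eq_rpow, ← Real.rpow_natCast (π ^ (1/2:ℝ)) n₀, ← Real.rpow_mul pi_pos.le]
    congr 1; ring
  have hpow : (r^2) ^ (((n₀:ℝ) + (N:ℝ))/2 - 1) = r ^ ((n₀:ℝ) + N - 2) := by
    rw [← Real.rpow_natCast r 2, ← Real.rpow_mul hr.le]
    congr 1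
    push_cast
    ring
  have hnat : r ^ (n₀-1) * r ^ N = r ^ ((n₀:ℝ) + N - 1) := by
    rw [← pow_add, ← Real.rpow_natCast r (n₀-1+N)]
    congr 1
    have : (1:ℕ) ≤ n₀ := hn₀
    push_cast [this]
    ring
  have hr2 : 2*r * (π ^ ((n₀:ℝ)/2) / Real.Gamma ((n₀:ℝ)/2) * r ^ ((n₀:ℝ) + N - 2))
      = 2 * (π ^ ((n₀:ℝ)/2) / Real.Gamma ((n₀:ℝ)/2)) * r ^ ((n₀:ℝ) + N - 1) := by
    rw [show ((n₀:ℝ) + N - 1) = 1 + ((n₀:ℝ) + N - 2) by ring, Real.rpow_add hr,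
      Real.rpow_one]
    ring
  rw [hpow, hnat, hr2, hsqrt, hΓ]
  field_simp

set_option maxHeartbeats 1000000 in
lemma key_lintegral (k n₀ : ℕ) (hn₀ : 0 < n₀) (d : Fin k → ℕ)
    (h : ℝ → ℝ≥0∞) (hm : Measurable h)
    (g : ℝ × (Π i : Fin k, EuclideanSpace ℝ (Fin (d i))) → ℝ≥0∞) (hg : Measurable g) :
    ∫⁻ p : EuclideanSpace ℝ (Fin n₀) × (Π i : Fin k, EuclideanSpace ℝ (Fin (d i))),
      g (‖p.1‖^2, ‖p.1‖⁻¹ • p.2) * h (‖p.1‖^2 + ∑ i, ‖p.2 i‖^2)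
    = ∫⁻ q : ℝ × (Π i : Fin k, EuclideanSpace ℝ (Fin (d i))),
      g q * ((Ioi (0:ℝ)).indicator
          (fun v => ENNReal.ofReal (π ^ ((n₀:ℝ)/2) / Real.Gamma ((n₀:ℝ)/2) *
            v ^ (((n₀:ℝ) + ∑ i, (d i:ℝ))/2 - 1))) q.1 * h (q.1 * (1 + ∑ i, ‖q.2 i‖^2))) := by
  let E₀ := EuclideanSpace ℝ (Fin n₀)
  let P := (Π i : Fin k, EuclideanSpace ℝ (Fin (d i)))
  set N := ∑ i, d i with hN
  haveI : Nontrivial E₀ :=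
    Module.nontrivial_of_finrank_pos (R := ℝ)
      (by simpa [E₀] using hn₀ : 0 < dim E₀)
  have hdE : dim E₀ = n₀ := by simp [E₀]
  have hdP : dim P = N := by simp [P, N, Module.finrank_pi_fintype]
  have hsum : ∑ i, ((d i : ℝ)) = (N:ℝ) := by push_cast [hN]; rfl
  have harg : Measurable fun q : ℝ × P => q.1 * (1 + ∑ i, ‖q.2 i‖^2) := by fun_prop
  have hGmeas : Measurable fun q : ℝ × P => g q * h (q.1 * (1 + ∑ i, ‖q.2 i‖^2)) := by
    fun_prop
  set Ψ : ℝ → ℝ≥0∞ := fun v => ∫⁻ t : P, g (v, t) * h (v * (1 + ∑ i, ‖t i‖^2)) with hΨdef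
  have hΨ : Measurable Ψ := hGmeas.lintegral_prod_right'
  set C : ℝ → ℝ := fun v => π ^ ((n₀:ℝ)/2) / Real.Gamma ((n₀:ℝ)/2) *
      v ^ (((n₀:ℝ) + ∑ i, (d i:ℝ))/2 - 1) with hC
  have hCm : Measurable fun v => ENNReal.ofReal (C v) := by
    apply ENNReal.measurable_ofReal.comp
    apply Measurable.const_mul
    measurability
  have hFmeas : Measurable fun p : E₀ × P => (‖p.1‖^2, ‖p.1‖⁻¹ • p.2) := by
    refine Measurable.prod (by fun_prop) ?_
    exact ((measurable_fst.norm.inv).smul measurable_snd)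
  have lhs_eq : (∫⁻ p : E₀ × P, g (‖p.1‖^2, ‖p.1‖⁻¹ • p.2) * h (‖p.1‖^2 + ∑ i, ‖p.2 i‖^2))
      = ↑n₀ * volume (ball (0:E₀) 1) *
        ∫⁻ r in Ioi (0:ℝ), ENNReal.ofReal (r ^ (n₀ - 1)) *
          (ENNReal.ofReal (r ^ N) * Ψ (r^2)) := by
    have ham : AEMeasurable (fun p : E₀ × P =>
        g (‖p.1‖^2, ‖p.1‖⁻¹ • p.2) * h (‖p.1‖^2 + ∑ i, ‖p.2 i‖^2))
        ((volume : Measure E₀).prod (volume : Measure P)) := by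
      exact ((hg.comp hFmeas).mul (hm.comp (by fun_prop))).aemeasurable
    rw [Measure.volume_eq_prod, lintegral_prod
      (fun p : E₀ × P => g (‖p.1‖^2, ‖p.1‖⁻¹ • p.2) * h (‖p.1‖^2 + ∑ i, ‖p.2 i‖^2)) ham]
    have h0 : ∀ᵐ x₀ : E₀ ∂volume, x₀ ≠ 0 := by
      rw [ae_iff]; simpa using measure_singleton (0:E₀)
    have step : ∫⁻ x₀ : E₀, ∫⁻ x : P, g (‖x₀‖^2, ‖x₀‖⁻¹ • x) * h (‖x₀‖^2 + ∑ i, ‖x i‖^2)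
        = ∫⁻ x₀ : E₀, (fun r => ENNReal.ofReal (r ^ N) * Ψ (r^2)) ‖x₀‖ := by
      refine lintegral_congr_ae ?_
      filter_upwards [h0] with x₀ hx₀
      have hr : ‖x₀‖ ≠ 0 := norm_ne_zero_iff.2 hx₀
      have e1 : ∀ x : P, g (‖x₀‖^2, ‖x₀‖⁻¹ • x) * h (‖x₀‖^2 + ∑ i, ‖x i‖^2)
          = (fun t : P => g (‖x₀‖^2, t) * h (‖x₀‖^2 * (1 + ∑ i, ‖t i‖^2))) (‖x₀‖⁻¹ • x) := by
        intro x
        simp only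
        congr 2
        have hco : ∀ i, ‖(‖x₀‖⁻¹ • x) i‖^2 = (‖x₀‖⁻¹)^2 * ‖x i‖^2 := by
          intro i
          rw [Pi.smul_apply, norm_smul, mul_pow]
          congr 1
          rw [norm_inv, norm_norm]
        rw [Finset.sum_congr rfl fun i _ => hco i, ← Finset.mul_sum, mul_add, mul_one,
          ← mul_assoc]
        congr 1
        field_simp
      simp only [e1]
      have hmc : Measurable (fun t : P => ‖x₀‖^2 * (1 + ∑ i, ‖t i‖^2)) := by fun_prop
      have hmeas2 : Measurable
          (fun t : P => g (‖x₀‖^2, t) * h (‖x₀‖^2 * (1 + ∑ i, ‖t i‖^2))) := by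
        exact (hg.comp measurable_prodMk_left).mul (hm.comp hmc)
      rw [lintegral_comp_inv_smul'' volume hr
        (fun t : P => g (‖x₀‖^2, t) * h (‖x₀‖^2 * (1 + ∑ i, ‖t i‖^2))) hmeas2,
        abs_of_nonneg (norm_nonneg _), hdP]
    have hfm : Measurable (fun r : ℝ => ENNReal.ofReal (r ^ N) * Ψ (r^2)) := by
      exact (ENNReal.measurable_ofReal.comp (measurable_id.pow_const N)).mul
        (hΨ.comp (measurable_id.pow_const 2))
    rw [step, lintegral_fun_norm_addHaar'' volume
        (fun r : ℝ => ENNReal.ofReal (r ^ N) * Ψ (r^2)) hfm, hdE]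
  have rhs_eq : (∫⁻ q : ℝ × P, g q * ((Ioi (0:ℝ)).indicator
          (fun v => ENNReal.ofReal (C v)) q.1 * h (q.1 * (1 + ∑ i, ‖q.2 i‖^2))))
      = ∫⁻ r in Ioi (0:ℝ), ENNReal.ofReal (2*r) * (ENNReal.ofReal (C (r^2)) * Ψ (r^2)) := by
    have hInd : Measurable fun q : ℝ × P =>
        (Ioi (0:ℝ)).indicator (fun v => ENNReal.ofReal (C v)) q.1 :=
      (hCm.indicator measurableSet_Ioi).comp measurable_fst
    have ham2 : AEMeasurable (fun q : ℝ × P => g q * ((Ioi (0:ℝ)).indicator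
        (fun v => ENNReal.ofReal (C v)) q.1 * h (q.1 * (1 + ∑ i, ‖q.2 i‖^2))))
        ((volume : Measure ℝ).prod (volume : Measure P)) := by
      exact (hg.mul (hInd.mul (hm.comp harg))).aemeasurable
    rw [Measure.volume_eq_prod, lintegral_prod
      (fun q : ℝ × P => g q * ((Ioi (0:ℝ)).indicator
        (fun v => ENNReal.ofReal (C v)) q.1 * h (q.1 * (1 + ∑ i, ‖q.2 i‖^2)))) ham2]
    have step : ∀ v : ℝ, (∫⁻ t : P, g (v, t) *
          ((Ioi (0:ℝ)).indicator (fun u => ENNReal.ofReal (C u)) v *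
            h (v * (1 + ∑ i, ‖t i‖^2))))
        = (Ioi (0:ℝ)).indicator (fun u => ENNReal.ofReal (C u) * Ψ u) v := by
      intro v
      by_cases hv : v ∈ Ioi (0:ℝ)
      · rw [indicator_of_mem hv, indicator_of_mem hv]
        have hmt : Measurable (fun t : P => g (v, t) * h (v * (1 + ∑ i, ‖t i‖^2))) := by
          exact hGmeas.comp (measurable_prodMk_left)
        rw [← lintegral_const_mul (ENNReal.ofReal (C v)) hmt]
        exact lintegral_congr fun t => by ring
      · rw [indicator_of_notMem hv, indicator_of_notMem hv]
        simp only [zero_mul, mul_zero, lintegral_zero]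
    rw [lintegral_congr step, lintegral_indicator measurableSet_Ioi,
      lintegral_Ioi_sq' (fun u => ENNReal.ofReal (C u) * Ψ u)]
  have hfin : Measurable (fun r : ℝ =>
      ENNReal.ofReal (r ^ (n₀-1)) * (ENNReal.ofReal (r ^ N) * Ψ (r^2))) := by
    exact (ENNReal.measurable_ofReal.comp (measurable_id.pow_const (n₀-1))).mul
      ((ENNReal.measurable_ofReal.comp (measurable_id.pow_const N)).mul
        (hΨ.comp (measurable_id.pow_const 2)))
  rw [lhs_eq, rhs_eq, ← lintegral_const_mul (↑n₀ * volume (ball (0:E₀) 1)) hfin]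
  refine setLIntegral_congr_fun measurableSet_Ioi (fun r hr => ?_)
  simp only [mem_Ioi] at hr
  haveI : Nonempty (Fin n₀) := Fin.pos_iff_nonempty.1 hn₀
  have hball : volume (ball (0:E₀) 1)
      = ENNReal.ofReal (Real.sqrt π ^ n₀ / Real.Gamma ((n₀:ℝ)/2 + 1)) := by
    rw [EuclideanSpace.volume_ball]
    simp
  have hΓpos : 0 < Real.Gamma ((n₀:ℝ)/2 + 1) :=
    Real.Gamma_pos_of_pos (by positivity)
  have hCr : C (r^2) = π ^ ((n₀:ℝ)/2) / Real.Gamma ((n₀:ℝ)/2) *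
      (r^2) ^ (((n₀:ℝ) + (N:ℝ))/2 - 1) := by
    rw [hC, hsum]
  calc
    ↑n₀ * volume (ball (0:E₀) 1) *
        (ENNReal.ofReal (r ^ (n₀-1)) * (ENNReal.ofReal (r ^ N) * Ψ (r^2)))
      = ENNReal.ofReal ((n₀:ℝ) * (Real.sqrt π ^ n₀ / Real.Gamma ((n₀:ℝ)/2 + 1)) *
          (r ^ (n₀-1) * r ^ N)) * Ψ (r^2) := by
        have hS : (0:ℝ) ≤ (n₀:ℝ) * (Real.sqrt π ^ n₀ / Real.Gamma ((n₀:ℝ)/2 + 1)) :=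
          mul_nonneg (Nat.cast_nonneg _) (div_nonneg (by positivity) hΓpos.le)
        rw [hball, ← ENNReal.ofReal_natCast n₀,
          ← ENNReal.ofReal_mul (Nat.cast_nonneg n₀),
          ENNReal.ofReal_mul hS,
          ENNReal.ofReal_mul (by positivity : (0:ℝ) ≤ r ^ (n₀-1))]
        ring
    _ = ENNReal.ofReal (2*r * (π ^ ((n₀:ℝ)/2) / Real.Gamma ((n₀:ℝ)/2) *
          (r^2) ^ (((n₀:ℝ) + (N:ℝ))/2 - 1))) * Ψ (r^2) := by
        rw [const_eq' n₀ N hn₀ hr]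
    _ = ENNReal.ofReal (2*r) * (ENNReal.ofReal (C (r^2)) * Ψ (r^2)) := by
        rw [hCr, ENNReal.ofReal_mul (by positivity)]
        ring

/-- Theorem 3.3(i) in the real vector case: if `(X₀, X₁, …, X_k)` has joint density
`h(‖x₀‖² + ⋯ + ‖x_k‖²)`, then `(V, T₁, …, T_k)` with `V = ‖X₀‖²`, `Tᵢ = V^{-1/2} Xᵢ`
has joint density `π^{n₀/2}/Γ(n₀/2) · v^{n/2-1} h(v(1 + ∑ᵢ ‖tᵢ‖²))` (for `v > 0`),
where `n = n₀ + ∑ᵢ nᵢ`. -/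
theorem stmt12 (k n₀ : ℕ) (hn₀ : 0 < n₀) (d : Fin k → ℕ)
    (h : ℝ → ENNReal) (hm : Measurable h)
    (hnorm : ∫⁻ x : EuclideanSpace ℝ (Fin (n₀ + ∑ i, d i)), h (‖x‖ ^ 2) = 1) :
    Measure.map
      (fun p : EuclideanSpace ℝ (Fin n₀) × (Π i : Fin k, EuclideanSpace ℝ (Fin (d i))) =>
        ((‖p.1‖ ^ 2 : ℝ), fun i => (Real.sqrt (‖p.1‖ ^ 2))⁻¹ • p.2 i))
      (volume.withDensity
        (fun p : EuclideanSpace ℝ (Fin n₀) × (Π i : Fin k, EuclideanSpace ℝ (Fin (d i))) =>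
          h (‖p.1‖ ^ 2 + ∑ i, ‖p.2 i‖ ^ 2))) =
    volume.withDensity
      (fun q : ℝ × (Π i : Fin k, EuclideanSpace ℝ (Fin (d i))) =>
        if 0 < q.1 then
          ENNReal.ofReal (π ^ ((n₀ : ℝ) / 2) / Real.Gamma ((n₀ : ℝ) / 2) *
            q.1 ^ (((n₀ : ℝ) + ∑ i, (d i : ℝ)) / 2 - 1)) *
            h (q.1 * (1 + ∑ i, ‖q.2 i‖ ^ 2))
        else 0) := by
  let E₀ := EuclideanSpace ℝ (Fin n₀)
  let P := (Π i : Fin k, EuclideanSpace ℝ (Fin (d i)))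
  have hF : (fun p : E₀ × P => ((‖p.1‖^2 : ℝ), fun i => (Real.sqrt (‖p.1‖^2))⁻¹ • p.2 i))
      = fun p : E₀ × P => ((‖p.1‖^2 : ℝ), ‖p.1‖⁻¹ • p.2) := by
    funext p
    rw [Real.sqrt_sq (norm_nonneg _)]
    rfl
  rw [hF]
  have hFmeas : Measurable fun p : E₀ × P => ((‖p.1‖^2 : ℝ), ‖p.1‖⁻¹ • p.2) := by
    refine Measurable.prod (by fun_prop) ?_
    exact ((measurable_fst.norm.inv).smul measurable_snd)
  ext s hs
  rw [Measure.map_apply hFmeas hs, withDensity_apply _ (hFmeas hs), withDensity_apply _ hs,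
    ← lintegral_indicator (hFmeas hs), ← lintegral_indicator hs]
  have lhs_pt : ∀ p : E₀ × P,
      ((fun p : E₀ × P => ((‖p.1‖^2 : ℝ), ‖p.1‖⁻¹ • p.2)) ⁻¹' s).indicator
        (fun p : E₀ × P => h (‖p.1‖ ^ 2 + ∑ i, ‖p.2 i‖ ^ 2)) p
      = (s.indicator (1 : ℝ × P → ℝ≥0∞)) ((‖p.1‖^2 : ℝ), ‖p.1‖⁻¹ • p.2) *
          h (‖p.1‖ ^ 2 + ∑ i, ‖p.2 i‖ ^ 2) := by
    intro p
    by_cases hp : ((‖p.1‖^2 : ℝ), ‖p.1‖⁻¹ • p.2) ∈ s <;>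
      simp [Set.indicator_apply, hp, Set.mem_preimage]
  have rhs_pt : ∀ q : ℝ × P,
      s.indicator (fun q : ℝ × P =>
        if 0 < q.1 then
          ENNReal.ofReal (π ^ ((n₀ : ℝ) / 2) / Real.Gamma ((n₀ : ℝ) / 2) *
            q.1 ^ (((n₀ : ℝ) + ∑ i, (d i : ℝ)) / 2 - 1)) *
            h (q.1 * (1 + ∑ i, ‖q.2 i‖ ^ 2))
        else 0) q
      = (s.indicator (1 : ℝ × P → ℝ≥0∞)) q * ((Ioi (0:ℝ)).indicator
          (fun v => ENNReal.ofReal (π ^ ((n₀:ℝ)/2) / Real.Gamma ((n₀:ℝ)/2) *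
            v ^ (((n₀:ℝ) + ∑ i, (d i:ℝ))/2 - 1))) q.1 * h (q.1 * (1 + ∑ i, ‖q.2 i‖^2))) := by
    intro q
    by_cases hq : q ∈ s <;> by_cases hq1 : 0 < q.1 <;>
      simp [Set.indicator_apply, hq, hq1, Set.mem_Ioi]
  simp only [lhs_pt, rhs_pt]
  exact (key_lintegral k n₀ hn₀ d h hm (s.indicator 1) (measurable_one.indicator hs)).trans
    (lintegral_congr fun q => (rhs_pt q).symm)
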